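/- Let t be a smooth function on U ⊂ ℝ⁵ with ξ₄(t) = 0 (integrability), where ξ₄ = −(x¹+3tx²)∂₀ − t³∂₁ + t²∂₂ − t∂₃ + ∂₄, and set ξ₃ = 3x²∂₀ + 3t²∂₁ − 2t∂₂ + ∂₃, ξ₂ = −3t∂₁ + ∂₂. Then the derived distribution of H = span{ξ₄, ξ₃, ξ₂} is 4-dimensional, spanned by ξ₄, ξ₃, ξ₂ and [ξ₃, ξ₂] = −3∂₀ − 3(3x²t_{x⁰} − 3t²t_{x¹} + t_{x³})∂₁ − 2(3t·t_{x¹} − t_{x²})∂₂ at every point; in particular [ξ₄, ξ₂] and [ξ₄, ξ₃] lie in span{ξ₄, ξ₃, ξ₂, [ξ₃,ξ₂]}. -/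

import Mathlib

/-- The Lie bracket of vector fields on `ℝ⁵` written in coordinates. -/
noncomputable def lieB (X Y : (Fin 5 → ℝ) → Fin 5 → ℝ) (x : Fin 5 → ℝ) : Fin 5 → ℝ :=
  fun i => fderiv ℝ (fun y => Y y i) x (X x) - fderiv ℝ (fun y => X y i) x (Y x)

/-- The vector field `ξ₄ = −(x¹+3tx²)∂₀ − t³∂₁ + t²∂₂ − t∂₃ + ∂₄`. -/
def xi4 (t : (Fin 5 → ℝ) → ℝ) : (Fin 5 → ℝ) → Fin 5 → ℝ :=
  fun x => ![-(x 1 + 3 * t x * x 2), -(t x) ^ 3, (t x) ^ 2, -(t x), 1]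

/-- The vector field `ξ₃ = 3x²∂₀ + 3t²∂₁ − 2t∂₂ + ∂₃`. -/
def xi3 (t : (Fin 5 → ℝ) → ℝ) : (Fin 5 → ℝ) → Fin 5 → ℝ :=
  fun x => ![3 * x 2, 3 * (t x) ^ 2, -(2 * t x), 1, 0]

/-- The vector field `ξ₂ = −3t∂₁ + ∂₂`. -/
def xi2 (t : (Fin 5 → ℝ) → ℝ) : (Fin 5 → ℝ) → Fin 5 → ℝ :=
  fun x => ![0, -(3 * t x), 1, 0, 0]

/-- The partial derivative `t_{xⁱ}`. -/
noncomputable def pd (t : (Fin 5 → ℝ) → ℝ) (i : Fin 5) (x : Fin 5 → ℝ) : ℝ :=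
  fderiv ℝ t x (Pi.single i 1)

/-! Since `∂ξ₄/∂t = −ξ₃`, the bracket `[ξ₄, ξ]` for `ξ = ξ₂, ξ₃` picks up `ξ(t) ξ₃` from the
`t`-dependence of `ξ₄`; the `t`-dependence of `ξ` contributes only through `ξ₄(t) = 0`, and the
explicit `x`-dependence cancels. Hence `[ξ₄, ξ₂] = ξ₂(t) ξ₃` and `[ξ₄, ξ₃] = ξ₃(t) ξ₃`. The four
fields are independent by triangularity: the `∂₄`, `∂₃`, `∂₀`, `∂₂` components, read in turn, kill
the coefficients of `ξ₄`, `ξ₃`, `[ξ₃, ξ₂]` (whose `∂₀`-component is `−3`) and `ξ₂`. -/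

theorem fderiv_coord_apply {ι : Type*} [Fintype ι] (i : ι) (x v : ι → ℝ) :
    fderiv ℝ (fun y : ι → ℝ => y i) x v = v i := by
  rw [(hasFDerivAt_apply i x).fderiv]
  rfl

section

variable {t : (Fin 5 → ℝ) → ℝ} {x : Fin 5 → ℝ}

theorem fderiv_apply_eq_sum_pd (v : Fin 5 → ℝ) : fderiv ℝ t x v = ∑ i, v i * pd t i x := by
  conv_lhs => rw [← Finset.univ_sum_single v]
  rw [map_sum]
  refine Finset.sum_congr rfl fun i _ => ?_
  rw [pd, ← smul_eq_mul, ← map_smul, ← Pi.single_smul, smul_eq_mul, mul_one]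

attribute [local simp] fderiv_fun_neg fderiv_fun_add fderiv_fun_mul fderiv_const_mul
  fderiv_fun_pow fderiv_coord_apply

section Jacobians

variable (hd : DifferentiableAt ℝ t x) (v : Fin 5 → ℝ) (i : Fin 5)
include hd

theorem fderiv_xi2_apply :
    fderiv ℝ (fun y => xi2 t y i) x v = ![0, -(3 * fderiv ℝ t x v), 0, 0, 0] i := by
  fin_cases i <;> simp only [xi2, Fin.zero_eta, Fin.mk_one, Fin.reduceFinMk, Matrix.cons_val]
  all_goals simp (disch := fun_prop)

theorem fderiv_xi3_apply :
    fderiv ℝ (fun y => xi3 t y i) x v =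
      ![3 * v 2, 6 * t x * fderiv ℝ t x v, -(2 * fderiv ℝ t x v), 0, 0] i := by
  fin_cases i <;> simp only [xi3, Fin.zero_eta, Fin.mk_one, Fin.reduceFinMk, Matrix.cons_val]
  all_goals simp (disch := fun_prop)
  ring

theorem fderiv_xi4_apply :
    fderiv ℝ (fun y => xi4 t y i) x v =
      ![-(v 1 + 3 * (x 2 * fderiv ℝ t x v + t x * v 2)), -(3 * t x ^ 2 * fderiv ℝ t x v),
        2 * t x * fderiv ℝ t x v, -fderiv ℝ t x v, 0] i := by
  fin_cases i <;> simp only [xi4, Fin.zero_eta, Fin.mk_one, Fin.reduceFinMk, Matrix.cons_val]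
  all_goals simp (disch := fun_prop)
  ring

end Jacobians

theorem lieB_xi3_xi2 (hd : DifferentiableAt ℝ t x) :
    lieB (xi3 t) (xi2 t) x =
      ![-3, -(3 * (3 * x 2 * pd t 0 x - 3 * (t x) ^ 2 * pd t 1 x + pd t 3 x)),
        -(2 * (3 * t x * pd t 1 x - pd t 2 x)), 0, 0] := by
  ext i
  simp only [lieB, fderiv_xi3_apply hd, fderiv_xi2_apply hd, fderiv_apply_eq_sum_pd,
    Fin.sum_univ_five]
  fin_cases i <;> simp [xi2, xi3] <;> ring

theorem lieB_xi4_xi2 (hd : DifferentiableAt ℝ t x) (hξ₄ : fderiv ℝ t x (xi4 t x) = 0) :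
    lieB (xi4 t) (xi2 t) x = fderiv ℝ t x (xi2 t x) • xi3 t x := by
  ext i
  simp only [lieB, fderiv_xi4_apply hd, fderiv_xi2_apply hd, hξ₄]
  fin_cases i <;> simp [xi2, xi3] <;> ring

theorem lieB_xi4_xi3 (hd : DifferentiableAt ℝ t x) (hξ₄ : fderiv ℝ t x (xi4 t x) = 0) :
    lieB (xi4 t) (xi3 t) x = fderiv ℝ t x (xi3 t x) • xi3 t x := by
  ext i
  simp only [lieB, fderiv_xi4_apply hd, fderiv_xi3_apply hd, hξ₄]
  fin_cases i <;> simp [xi3, xi4] <;> ring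

theorem linearIndependent_xi4_xi3_xi2_extend (t : (Fin 5 → ℝ) → ℝ) (x : Fin 5 → ℝ)
    {v : Fin 5 → ℝ} (h0 : v 0 ≠ 0) (h3 : v 3 = 0) (h4 : v 4 = 0) :
    LinearIndependent ℝ ![xi4 t x, xi3 t x, xi2 t x, v] := by
  rw [Fintype.linearIndependent_iff]
  intro c hc
  have e : ∀ i, ∑ j, c j * ![xi4 t x, xi3 t x, xi2 t x, v] j i = 0 := fun i => by
    simpa using congrFun hc i
  have c0 : c 0 = 0 := by simpa [Fin.sum_univ_four, xi4, xi3, xi2, h4] using e 4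
  have c1 : c 1 = 0 := by simpa [Fin.sum_univ_four, xi4, xi3, xi2, h3, c0] using e 3
  have c3 : c 3 = 0 := by simpa [Fin.sum_univ_four, xi4, xi3, xi2, c0, c1, h0] using e 0
  have c2 : c 2 = 0 := by simpa [Fin.sum_univ_four, xi4, xi3, xi2, c0, c1, c3] using e 2
  intro i
  fin_cases i <;> assumption

end

/-- In the integrable case `ξ₄(t) = 0`, the derived distribution of
`H = span{ξ₄, ξ₃, ξ₂}` is 4-dimensional, spanned by `ξ₄, ξ₃, ξ₂` and
`[ξ₃,ξ₂] = −3∂₀ − 3(3x²t_{x⁰} − 3t²t_{x¹} + t_{x³})∂₁ − 2(3t·t_{x¹} − t_{x²})∂₂`;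
in particular `[ξ₄,ξ₂]` and `[ξ₄,ξ₃]` lie in `span{ξ₄, ξ₃, ξ₂, [ξ₃,ξ₂]}`. -/
theorem derived_distribution_integrable_case
    (U : Set (Fin 5 → ℝ)) (hU : IsOpen U) (t : (Fin 5 → ℝ) → ℝ)
    (ht : ContDiffOn ℝ (⊤ : ℕ∞) t U)
    (hJ : ∀ x ∈ U,
      (x 1 + 3 * t x * x 2) * pd t 0 x + (t x) ^ 3 * pd t 1 x - (t x) ^ 2 * pd t 2 x +
        t x * pd t 3 x - pd t 4 x = 0) :
    ∀ x ∈ U,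
      lieB (xi3 t) (xi2 t) x =
        ![-3, -(3 * (3 * x 2 * pd t 0 x - 3 * (t x) ^ 2 * pd t 1 x + pd t 3 x)),
          -(2 * (3 * t x * pd t 1 x - pd t 2 x)), 0, 0] ∧
      lieB (xi4 t) (xi2 t) x ∈ Submodule.span ℝ
        ({xi4 t x, xi3 t x, xi2 t x, lieB (xi3 t) (xi2 t) x} : Set (Fin 5 → ℝ)) ∧
      lieB (xi4 t) (xi3 t) x ∈ Submodule.span ℝ
        ({xi4 t x, xi3 t x, xi2 t x, lieB (xi3 t) (xi2 t) x} : Set (Fin 5 → ℝ)) ∧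
      LinearIndependent ℝ ![xi4 t x, xi3 t x, xi2 t x, lieB (xi3 t) (xi2 t) x] := by
  intro x hx
  have hd : DifferentiableAt ℝ t x :=
    (ht.contDiffAt (hU.mem_nhds hx)).differentiableAt (by simp)
  have hξ₄ : fderiv ℝ t x (xi4 t x) = 0 := by
    rw [fderiv_apply_eq_sum_pd, Fin.sum_univ_five]
    simp only [xi4, Matrix.cons_val]
    linarith [hJ x hx]
  have hξ₃ : xi3 t x ∈ Submodule.span ℝ
      ({xi4 t x, xi3 t x, xi2 t x, lieB (xi3 t) (xi2 t) x} : Set (Fin 5 → ℝ)) :=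
    Submodule.subset_span (by simp)
  refine ⟨lieB_xi3_xi2 hd, ?_, ?_, ?_⟩
  · rw [lieB_xi4_xi2 hd hξ₄]
    exact Submodule.smul_mem _ _ hξ₃
  · rw [lieB_xi4_xi3 hd hξ₄]
    exact Submodule.smul_mem _ _ hξ₃
  · rw [lieB_xi3_xi2 hd]
    exact linearIndependent_xi4_xi3_xi2_extend t x (by norm_num) rfl rfl
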